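/- arXiv:2409.14901 — 5 statements merged into one kernel-verified Lean document; each statement's English description precedes it below -/
import Mathlib

section
/- Any stable model of a MANLP ℙ is a minimal model of ℙ: if I is a stable model of ℙ, then I is a model of ℙ, and every model J of ℙ with J ⊑ I satisfies J = I. -/
/-- A multi-adjoint lattice structure on a complete lattice `L`: `n` adjoint pairs
`(&_i, ←_i)` such that each `&_i` is monotone in both arguments, each `←_i` is monotone
in the first argument (consequent) and antitone in the second (antecedent), the
adjointness condition holds, and `⊤` is a two-sided unit for each `&_i`. -/
structure MALattice (L : Type*) [CompleteLattice L] (n : ℕ) where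
  conj : Fin n → L → L → L
  impl : Fin n → L → L → L
  conj_mono_left : ∀ i z, Monotone fun x => conj i x z
  conj_mono_right : ∀ i x, Monotone fun z => conj i x z
  impl_mono_left : ∀ i z, Monotone fun y => impl i y z
  impl_anti_right : ∀ i y, Antitone fun z => impl i y z
  adjoint : ∀ i x y z, x ≤ impl i y z ↔ conj i x z ≤ y
  conj_top_left : ∀ i x, conj i ⊤ x = x
  conj_top_right : ∀ i x, conj i x ⊤ = x

/-- A negation operator on `L`: antitone, with `¬⊥ = ⊤` and `¬⊤ = ⊥`. -/
structure NegOp (L : Type*) [CompleteLattice L] where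
  neg : L → L
  anti : Antitone neg
  neg_bot : neg ⊥ = ⊤
  neg_top : neg ⊤ = ⊥

/-- A rule of a multi-adjoint normal logic program over atoms `Atom` and truth values `L`:
a head `p_r`, an index `i_r` of the adjoint pair used, a weight `θ_r`, and a body-evaluation
map `B_r`, monotone in both arguments; the first argument receives the interpretation of
positive atoms and the second the (already negated) interpretation of negated atoms. -/
structure NRule (L : Type*) (Atom : Type*) [CompleteLattice L] (n : ℕ) where
  head : Atom
  idx : Fin n
  weight : L
  body : (Atom → L) → (Atom → L) → L
  body_mono : ∀ ⦃I I' J J' : Atom → L⦄, I ≤ I' → J ≤ J' → body I J ≤ body I' J'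

variable {L Atom R : Type*} [CompleteLattice L] {n : ℕ}

/-- The value `θ_r &_{i_r} B_r(I, ¬∘J)` contributed by a rule, where the positive part of
the body is evaluated under `I` and the negated part under `J`. -/
def ruleVal (ML : MALattice L n) (N : NegOp L) (r : NRule L Atom n)
    (I J : Atom → L) : L :=
  ML.conj r.idx r.weight (r.body I (N.neg ∘ J))

/-- The immediate consequence operator of a MANLP `P` (a finite set of rules indexed by `R`):
`T_P(I)(p) = sup { θ_r &_{i_r} B_r(I, ¬∘I) : r ∈ P, p_r = p }`. -/
def Tp (ML : MALattice L n) (N : NegOp L) (P : R → NRule L Atom n)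
    (I : Atom → L) (p : Atom) : L :=
  ⨆ r : {r : R // (P r).head = p}, ruleVal ML N (P r.1) I I

/-- `I` is a model of the reduct `P_J`: each rule, with its negated atoms evaluated under
`J`, is satisfied by `I`. -/
def isModelReduct (ML : MALattice L n) (N : NegOp L) (P : R → NRule L Atom n)
    (J I : Atom → L) : Prop :=
  ∀ r : R, ruleVal ML N (P r) I J ≤ I (P r).head

/-- `I` is a model of the MANLP `P`: `θ_r ≤ (I(p_r) ←_{i_r} B_r(I, ¬∘I))` for every rule. -/
def isModel (ML : MALattice L n) (N : NegOp L) (P : R → NRule L Atom n)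
    (I : Atom → L) : Prop :=
  ∀ r : R, (P r).weight ≤ ML.impl (P r).idx (I (P r).head) ((P r).body I (N.neg ∘ I))

/-- `I` is a stable model of `P`: `I` is a minimal model of the reduct `P_I`. -/
def isStable (ML : MALattice L n) (N : NegOp L) (P : R → NRule L Atom n)
    (I : Atom → L) : Prop :=
  isModelReduct ML N P I I ∧
    ∀ J : Atom → L, isModelReduct ML N P I J → J ≤ I → J = I

/-- any stable model of a MANLP `P` is a minimal model of `P`: if `I` is a
stable model of `P`, then `I` is a model of `P`, and every model `J` of `P` with `J ⊑ I`
satisfies `J = I`. -/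
theorem stable_is_minimal_model [Fintype Atom] [Fintype R]
    (ML : MALattice L n) (N : NegOp L) (P : R → NRule L Atom n)
    (I : Atom → L) (hI : isStable ML N P I) :
    isModel ML N P I ∧ ∀ J : Atom → L, isModel ML N P J → J ≤ I → J = I := by
  obtain ⟨hmod, hmin⟩ := hI
  constructor
  · intro r
    exact (ML.adjoint _ _ _ _).2 (hmod r)
  · intro J hJ hJI
    apply hmin J _ hJI
    intro r
    have h1 : ruleVal ML N (P r) J J ≤ J (P r).head := (ML.adjoint _ _ _ _).1 (hJ r)
    refine le_trans ?_ h1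
    unfold ruleVal
    apply ML.conj_mono_right
    exact (P r).body_mono le_rfl (fun p => N.anti (hJI p))
end

section
/- Any stable model of a MANLP ℙ is a minimal fix-point of the immediate consequence operator T_ℙ: if I is a stable model of ℙ, then T_ℙ(I) = I, and every interpretation N with T_ℙ(N) = N and N ⊑ I satisfies N = I. -/
variable {L Atom R : Type*} [CompleteLattice L] {n : ℕ}

/-- any stable model of a MANLP `P` is a minimal fix-point of the immediate
consequence operator `T_P`: if `I` is a stable model of `P`, then `T_P(I) = I`, and every
interpretation `M` with `T_P(M) = M` and `M ⊑ I` satisfies `M = I`. -/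
theorem stable_is_minimal_fixpoint [Fintype Atom] [Fintype R]
    (ML : MALattice L n) (N : NegOp L) (P : R → NRule L Atom n)
    (I : Atom → L) (hI : isStable ML N P I) :
    Tp ML N P I = I ∧ ∀ M : Atom → L, Tp ML N P M = M → M ≤ I → M = I := by
  obtain ⟨hmod, hmin⟩ := hI
  have hTle : Tp ML N P I ≤ I := by
    intro p
    apply iSup_le
    rintro ⟨r, rfl⟩
    exact hmod r
  have hTfix : Tp ML N P I = I := by
    apply hmin _ _ hTle
    intro r
    calc ruleVal ML N (P r) (Tp ML N P I) I
        ≤ ruleVal ML N (P r) I I :=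
          ML.conj_mono_right _ _ ((P r).body_mono hTle le_rfl)
      _ ≤ Tp ML N P I (P r).head :=
          le_iSup (fun s : {s : R // (P s).head = (P r).head} =>
            ruleVal ML N (P s.1) I I) ⟨r, rfl⟩
  refine ⟨hTfix, ?_⟩
  intro M hM hMI
  apply hmin _ _ hMI
  intro r
  have h1 : ruleVal ML N (P r) M I ≤ ruleVal ML N (P r) M M :=
    ML.conj_mono_right _ _ ((P r).body_mono le_rfl (fun p => N.anti (hMI p)))
  have h2 : ruleVal ML N (P r) M M ≤ Tp ML N P M (P r).head :=
    le_iSup (fun s : {s : R // (P s).head = (P r).head} =>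
      ruleVal ML N (P s.1) M M) ⟨r, rfl⟩
  rw [hM] at h2
  exact h1.trans h2
end

section
/- Let k, h, α, γ be natural numbers with h ≤ k, and let θ ∈ [0,1]. Define f : ℝ^k → ℝ by f(x_1,…,x_k) = θ^α · (x_1 ⋯ x_h · (1−x_{h+1}) ⋯ (1−x_k))^γ. Then for all points u, v ∈ [0,1]^k with u_j ≤ v_j for every j ∈ {1,…,k}, the sum of the absolute values of the partial derivatives of f at u satisfies: ∑_{j=1}^{k} |∂f/∂x_j (u)| ≤ ∑_{j=1}^{h} θ^α · γ · v_j^{γ−1} · (v_1 ⋯ v_{j−1} · v_{j+1} ⋯ v_h)^γ + θ^α · γ · (k−h) · (v_1 ⋯ v_h)^γ. -/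
open Set

private lemma aux_fderiv (k h α γ : ℕ) (θ : ℝ)
    (f : (Fin k → ℝ) → ℝ)
    (hf : ∀ x : Fin k → ℝ,
      f x = θ ^ α * (∏ j : Fin k, if (j : ℕ) < h then x j else 1 - x j) ^ γ)
    (u : Fin k → ℝ) (j : Fin k) :
    fderiv ℝ f u (Pi.single j 1) =
      θ ^ α * ((γ : ℝ) * (∏ j' : Fin k, if (j' : ℕ) < h then u j' else 1 - u j') ^ (γ - 1)) *
        ((∏ j' ∈ Finset.univ.erase j, if (j' : ℕ) < h then u j' else 1 - u j') *
          (if (j : ℕ) < h then 1 else -1)) := by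
  classical
  set F : Fin k → (Fin k → ℝ) → ℝ := fun i x => if (i : ℕ) < h then x i else 1 - x i with hF
  set L : Fin k → (Fin k → ℝ) →L[ℝ] ℝ :=
    fun i => (if (i : ℕ) < h then (1 : ℝ) else -1) • ContinuousLinearMap.proj i (R := ℝ) with hL
  have hFd : ∀ i : Fin k, HasFDerivAt (F i) (L i) u := by
    intro i
    by_cases hi : (i : ℕ) < h
    · simp only [F, L, hi, if_true, one_smul]
      exact (ContinuousLinearMap.proj i (R := ℝ) :
        (Fin k → ℝ) →L[ℝ] ℝ).hasFDerivAt
    · have := ((ContinuousLinearMap.proj i (R := ℝ) :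
        (Fin k → ℝ) →L[ℝ] ℝ).hasFDerivAt (x := u)).const_sub (1 : ℝ)
      have e : ((-1 : ℝ) • (ContinuousLinearMap.proj i (R := ℝ) : (Fin k → ℝ) →L[ℝ] ℝ))
          = -(ContinuousLinearMap.proj i (R := ℝ)) := by ext x; simp
      simp only [hF, hL, hi, if_false, e]
      simpa using this
  have hP : HasFDerivAt (fun x => ∏ i : Fin k, F i x)
      (∑ i : Fin k, (∏ j' ∈ Finset.univ.erase i, F j' u) • L i) u :=
    HasFDerivAt.finset_prod (fun i _ => hFd i)
  have hpow := (hasDerivAt_pow γ ((∏ i : Fin k, F i u))).comp_hasFDerivAt u hP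
  have hfull := hpow.const_mul (θ ^ α)
  have hfull' : HasFDerivAt (fun x => θ ^ α * (∏ i : Fin k, F i x) ^ γ)
      (θ ^ α • (↑γ * (∏ i : Fin k, F i u) ^ (γ - 1)) •
        ∑ i : Fin k, (∏ j' ∈ Finset.univ.erase i, F j' u) • L i) u := by
    simpa [Function.comp] using hfull
  have hfeq : f = fun x => θ ^ α * (∏ i : Fin k, F i x) ^ γ := funext hf
  rw [hfeq, hfull'.fderiv]
  simp only [ContinuousLinearMap.smul_apply, ContinuousLinearMap.sum_apply, L,
    ContinuousLinearMap.proj_apply, Pi.single_apply, smul_eq_mul, mul_ite, mul_one, mul_zero,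
    ite_mul, zero_mul]
  rw [Finset.sum_ite_eq' Finset.univ j]
  simp only [Finset.mem_univ, if_true]
  simp only [F]
  split <;> ring



/-- let `k, h, α, γ` be naturals with `h ≤ k` and `θ ∈ [0,1]`, and let
`f(x_1,…,x_k) = θ^α · (x_1 ⋯ x_h · (1−x_{h+1}) ⋯ (1−x_k))^γ`.  Then for all points
`u, v ∈ [0,1]^k` with `u_j ≤ v_j` for every `j`, the sum of the absolute values of the
partial derivatives of `f` at `u` is bounded by
`∑_{j=1}^{h} θ^α·γ·v_j^{γ−1}·(v_1 ⋯ v_{j−1}·v_{j+1} ⋯ v_h)^γ + θ^α·γ·(k−h)·(v_1 ⋯ v_h)^γ`.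
The `j`-th partial derivative of `f` at `u` is `fderiv ℝ f u (Pi.single j 1)`. -/
theorem sum_abs_partial_deriv_le
    (k h α γ : ℕ) (hhk : h ≤ k) (θ : ℝ) (hθ : θ ∈ Icc (0 : ℝ) 1)
    (f : (Fin k → ℝ) → ℝ)
    (hf : ∀ x : Fin k → ℝ,
      f x = θ ^ α * (∏ j : Fin k, if (j : ℕ) < h then x j else 1 - x j) ^ γ)
    (u v : Fin k → ℝ)
    (hu : ∀ j, u j ∈ Icc (0 : ℝ) 1) (hv : ∀ j, v j ∈ Icc (0 : ℝ) 1)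
    (huv : ∀ j, u j ≤ v j) :
    ∑ j : Fin k, |fderiv ℝ f u (Pi.single j 1)| ≤
      (∑ j : Fin k, if (j : ℕ) < h then
          θ ^ α * (γ : ℝ) * v j ^ (γ - 1) *
            (∏ j' : Fin k, if (j' : ℕ) < h ∧ j' ≠ j then v j' else 1) ^ γ
        else 0)
      + θ ^ α * (γ : ℝ) * ((k - h : ℕ) : ℝ) *
          (∏ j : Fin k, if (j : ℕ) < h then v j else 1) ^ γ := by
  classical
  set P : ℝ := ∏ j' : Fin k, if (j' : ℕ) < h then u j' else 1 - u j' with hPdef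
  set E : Fin k → ℝ := fun j => ∏ j' ∈ Finset.univ.erase j,
    if (j' : ℕ) < h then u j' else 1 - u j' with hEdef
  have hθ0 : (0:ℝ) ≤ θ ^ α := pow_nonneg hθ.1 α
  have key : ∀ i : Fin k,
      0 ≤ (if (i : ℕ) < h then u i else 1 - u i) ∧
      (if (i : ℕ) < h then u i else 1 - u i) ≤ (if (i : ℕ) < h then v i else 1) := by
    intro i
    by_cases hi : (i : ℕ) < h <;> simp only [hi, if_true, if_false]
    · exact ⟨(hu i).1, huv i⟩
    · constructor <;> linarith [(hu i).1, (hu i).2]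
  have hP0 : 0 ≤ P := Finset.prod_nonneg fun i _ => (key i).1
  have hE0 : ∀ j, 0 ≤ E j := fun j => Finset.prod_nonneg fun i _ => (key i).1
  have habs : ∀ j : Fin k, |fderiv ℝ f u (Pi.single j 1)| =
      θ ^ α * ((γ : ℝ) * P ^ (γ - 1)) * E j := by
    intro j
    rw [aux_fderiv k h α γ θ f hf u j]
    show |θ ^ α * ((γ : ℝ) * P ^ (γ - 1)) * (E j * (if (j : ℕ) < h then (1:ℝ) else -1))| =
      θ ^ α * ((γ : ℝ) * P ^ (γ - 1)) * E j
    have h1 : |θ ^ α * ((γ : ℝ) * P ^ (γ - 1))| = θ ^ α * ((γ : ℝ) * P ^ (γ - 1)) :=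
      abs_of_nonneg (mul_nonneg hθ0 (mul_nonneg (Nat.cast_nonneg γ) (pow_nonneg hP0 _)))
    have h2 : |E j| = E j := abs_of_nonneg (hE0 j)
    have h3 : |if (j : ℕ) < h then (1:ℝ) else -1| = 1 := by split <;> simp
    rw [abs_mul, h1, abs_mul, h2, h3, mul_one]
  rcases Nat.eq_zero_or_pos γ with rfl | hγ
  · simp [habs]
  -- γ ≥ 1
  set R : ℝ := ∏ j' : Fin k, if (j' : ℕ) < h then v j' else 1 with hRdef
  have hR0 : 0 ≤ R := Finset.prod_nonneg fun i _ => le_trans (key i).1 (key i).2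
  have hRsplit : ∀ j : Fin k, R = (if (j : ℕ) < h then v j else 1) *
      ∏ j' ∈ Finset.univ.erase j, (if (j' : ℕ) < h then v j' else 1) :=
    fun j => (Finset.mul_prod_erase _ _ (Finset.mem_univ j)).symm
  have hER : ∀ j : Fin k, E j ≤ ∏ j' ∈ Finset.univ.erase j,
      (if (j' : ℕ) < h then v j' else 1) :=
    fun j => Finset.prod_le_prod (fun i _ => (key i).1) (fun i _ => (key i).2)
  have hPR : P ≤ R := Finset.prod_le_prod (fun i _ => (key i).1) (fun i _ => (key i).2)
  have hEe0 : ∀ j : Fin k, (0:ℝ) ≤ ∏ j' ∈ Finset.univ.erase j,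
      (if (j' : ℕ) < h then v j' else 1) :=
    fun j => Finset.prod_nonneg fun i _ => le_trans (key i).1 (key i).2
  calc ∑ j : Fin k, |fderiv ℝ f u (Pi.single j 1)|
      ≤ ∑ j : Fin k, (if (j : ℕ) < h then
          θ ^ α * (γ : ℝ) * v j ^ (γ - 1) *
            (∏ j' : Fin k, if (j' : ℕ) < h ∧ j' ≠ j then v j' else 1) ^ γ
        else θ ^ α * (γ : ℝ) * R ^ γ) := by
        apply Finset.sum_le_sum
        intro j _
        rw [habs j]
        by_cases hj : (j : ℕ) < h
        · simp only [hj, if_true]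
          set Q : ℝ := ∏ j' : Fin k, if (j' : ℕ) < h ∧ j' ≠ j then v j' else 1 with hQdef
          have hQeq : Q = ∏ j' ∈ Finset.univ.erase j, (if (j' : ℕ) < h then v j' else 1) := by
            rw [hQdef, ← Finset.mul_prod_erase _ _ (Finset.mem_univ j)]
            simp only [ne_eq, not_true_eq_false, and_false, if_false, one_mul]
            exact Finset.prod_congr rfl fun i hi => by
              simp [Finset.ne_of_mem_erase hi]
          have hQ0 : 0 ≤ Q := hQeq ▸ hEe0 j
          have hv0 : (0:ℝ) ≤ v j := (hv j).1
          have hPle : P ≤ v j * Q := by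
            rw [hQeq]
            calc P ≤ R := hPR
              _ = v j * ∏ j' ∈ Finset.univ.erase j, (if (j' : ℕ) < h then v j' else 1) := by
                  rw [hRsplit j]; simp [hj]
          have hEQ : E j ≤ Q := hQeq ▸ hER j
          have step : P ^ (γ - 1) * E j ≤ (v j * Q) ^ (γ - 1) * Q :=
            mul_le_mul (pow_le_pow_left₀ hP0 hPle _) hEQ (hE0 j)
              (pow_nonneg (mul_nonneg hv0 hQ0) _)
          have hexp : (v j * Q) ^ (γ - 1) * Q = v j ^ (γ - 1) * Q ^ γ := by
            rw [mul_pow, mul_assoc, ← pow_succ, Nat.sub_add_cancel hγ]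
          calc θ ^ α * ((γ : ℝ) * P ^ (γ - 1)) * E j
              = θ ^ α * (γ : ℝ) * (P ^ (γ - 1) * E j) := by ring
            _ ≤ θ ^ α * (γ : ℝ) * ((v j * Q) ^ (γ - 1) * Q) :=
                mul_le_mul_of_nonneg_left step (mul_nonneg hθ0 (Nat.cast_nonneg γ))
            _ = θ ^ α * (γ : ℝ) * v j ^ (γ - 1) * Q ^ γ := by rw [hexp]; ring
        · simp only [hj, if_false]
          have hEle : E j ≤ R := by
            rw [hRsplit j]
            simp only [hj, if_false, one_mul]
            exact hER j
          have step : P ^ (γ - 1) * E j ≤ R ^ (γ - 1) * R :=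
            mul_le_mul (pow_le_pow_left₀ hP0 hPR _) hEle (hE0 j) (pow_nonneg hR0 _)
          have hRpow : R ^ (γ - 1) * R = R ^ γ := by
            rw [← pow_succ, Nat.sub_add_cancel hγ]
          rw [hRpow] at step
          calc θ ^ α * ((γ : ℝ) * P ^ (γ - 1)) * E j
              = θ ^ α * (γ : ℝ) * (P ^ (γ - 1) * E j) := by ring
            _ ≤ θ ^ α * (γ : ℝ) * R ^ γ := by
                apply mul_le_mul_of_nonneg_left step
                exact mul_nonneg hθ0 (Nat.cast_nonneg γ)
    _ = (∑ j : Fin k, if (j : ℕ) < h then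
          θ ^ α * (γ : ℝ) * v j ^ (γ - 1) *
            (∏ j' : Fin k, if (j' : ℕ) < h ∧ j' ≠ j then v j' else 1) ^ γ
        else 0)
      + θ ^ α * (γ : ℝ) * ((k - h : ℕ) : ℝ) * R ^ γ := by
        have hpt : ∀ j : Fin k,
            (if (j : ℕ) < h then
              θ ^ α * (γ : ℝ) * v j ^ (γ - 1) *
                (∏ j' : Fin k, if (j' : ℕ) < h ∧ j' ≠ j then v j' else 1) ^ γ
            else θ ^ α * (γ : ℝ) * R ^ γ)
            = (if (j : ℕ) < h then
                θ ^ α * (γ : ℝ) * v j ^ (γ - 1) *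
                  (∏ j' : Fin k, if (j' : ℕ) < h ∧ j' ≠ j then v j' else 1) ^ γ
              else 0)
              + (if (j : ℕ) < h then 0 else θ ^ α * (γ : ℝ) * R ^ γ) := by
          intro j; split <;> simp
        rw [Finset.sum_congr rfl fun j _ => hpt j, Finset.sum_add_distrib]
        congr 1
        rw [Fin.sum_univ_eq_sum_range (fun n => if n < h then (0:ℝ) else θ ^ α * (γ : ℝ) * R ^ γ) k]
        rw [Finset.sum_ite, Finset.sum_const_zero, zero_add, Finset.sum_const, nsmul_eq_mul]
        have hfil : (Finset.range k).filter (fun n => ¬ n < h) = Finset.Ico h k := by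
          ext n
          simp only [Finset.mem_filter, Finset.mem_range, Finset.mem_Ico, not_lt]
          tauto
        rw [hfil, Nat.card_Ico]
        ring
end

section
/- For a positive multi-adjoint logic program ℚ, the operator T_ℚ is monotone on the complete lattice of interpretations, hence by the Knaster–Tarski theorem it has a least fix-point, and this least fix-point is the least model of ℚ: it is a model of ℚ and it is ⊑-below every model of ℚ. -/
/-- A rule of a positive multi-adjoint logic program: a head `p_r`, an index `i_r` of the
adjoint pair used, a weight `θ_r`, and a monotone body-evaluation map `B_r`. -/
structure PRule (L : Type*) (Atom : Type*) [CompleteLattice L] (n : ℕ) where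
  head : Atom
  idx : Fin n
  weight : L
  body : (Atom → L) → L
  body_mono : Monotone body

variable {L Atom R : Type*} [CompleteLattice L] {n : ℕ}

/-- The immediate consequence operator of a positive program `Q` (a finite set of rules
indexed by `R`): `T_Q(I)(p) = sup { θ_r &_{i_r} B_r(I) : r ∈ Q, p_r = p }`. -/
def Tq (ML : MALattice L n) (Q : R → PRule L Atom n) (I : Atom → L) (p : Atom) : L :=
  ⨆ r : {r : R // (Q r).head = p}, ML.conj (Q r.1).idx (Q r.1).weight ((Q r.1).body I)

/-- `I` is a model of the positive program `Q`: `θ_r ≤ (I(p_r) ←_{i_r} B_r(I))` for every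
rule `r` of `Q`. -/
def isModelP (ML : MALattice L n) (Q : R → PRule L Atom n) (I : Atom → L) : Prop :=
  ∀ r : R, (Q r).weight ≤ ML.impl (Q r).idx (I (Q r).head) ((Q r).body I)

/-- for a positive multi-adjoint logic program `Q`, the operator `T_Q` is
monotone on the complete lattice of interpretations, hence (Knaster–Tarski) it has a least
fix-point `M`, and this least fix-point is the least model of `Q`: it is a model of `Q`
and is `⊑`-below every model of `Q`. -/
theorem Tq_least_fixpoint_least_model [Fintype Atom] [Fintype R]
    (ML : MALattice L n) (Q : R → PRule L Atom n) :
    Monotone (Tq ML Q) ∧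
      ∃ M : Atom → L,
        (Tq ML Q M = M ∧ ∀ I : Atom → L, Tq ML Q I = I → M ≤ I) ∧
        isModelP ML Q M ∧ ∀ I : Atom → L, isModelP ML Q I → M ≤ I := by
  have hmono : Monotone (Tq ML Q) := by
    intro I J hIJ p
    exact iSup_mono fun r =>
      ML.conj_mono_right _ _ ((Q r.1).body_mono hIJ)
  have hmodel : ∀ I : Atom → L, isModelP ML Q I ↔ Tq ML Q I ≤ I := by
    intro I
    constructor
    · intro h p
      refine iSup_le fun r => (ML.adjoint _ _ _ _).mp ?_
      have := h r.1
      rwa [r.2] at this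
    · intro h r
      refine (ML.adjoint _ _ _ _).mpr ?_
      refine le_trans ?_ (h (Q r).head)
      exact le_iSup (fun s : {s : R // (Q s).head = (Q r).head} =>
        ML.conj (Q s.1).idx (Q s.1).weight ((Q s.1).body I)) ⟨r, rfl⟩
  let T : (Atom → L) →o (Atom → L) := ⟨Tq ML Q, hmono⟩
  refine ⟨hmono, OrderHom.lfp T, ⟨T.map_lfp, fun I hI => OrderHom.lfp_le T (le_of_eq hI)⟩,
    (hmodel _).mpr (le_of_eq T.map_lfp), fun I hI => OrderHom.lfp_le T ((hmodel I).mp hI)⟩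
end

section
/- Every fix-point of T_ℙ is bounded by the maximal weights: let ℙ be a finite MANLP on C([0,1]) whose bodies use only ei-products with all exponents 1, and assume 1 ≤ β_w and 1 ≤ δ_w for every rule of ℙ. If I is an interpretation with T_ℙ(I) = I, then I(p) ≤ (θ¹_p, θ²_p) for every p ∈ Π, i.e., I ⊑ I_θ where I_θ(p) = (θ¹_p, θ²_p). -/
noncomputable section

/-- A rule `⟨p ←^{αγ}_{βδ} q_1 ∗ ⋯ ∗ q_h ∗ ¬q_{h+1} ∗ ⋯ ∗ ¬q_k ; (θ¹,θ²)⟩` of a MANLP on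
`C([0,1]) = {(a,b) ∈ [0,1]² : a ≤ b}`, whose body is the componentwise product (the
ei-product with all exponents `1`) of the first `h` atoms and the negations
`¬(a,b) = (1−b,1−a)` of the remaining `k − h` atoms; the implication is the residuated
implication of the ei-product `&^{αγ}_{βδ}((a,b),(c,d)) = (a^α·c^γ, b^β·d^δ)` with
`β ≤ α`, `δ ≤ γ`. -/
structure CRule (Atom : Type*) where
  head : Atom
  k : ℕ
  h : ℕ
  h_le_k : h ≤ k
  atoms : Fin k → Atom
  atoms_inj : Function.Injective atoms
  α : ℕ
  β : ℕ
  γ : ℕ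
  δ : ℕ
  β_le_α : β ≤ α
  δ_le_γ : δ ≤ γ
  θ₁ : ℝ
  θ₂ : ℝ
  θ₁_nonneg : 0 ≤ θ₁
  θ₁_le_θ₂ : θ₁ ≤ θ₂
  θ₂_le_one : θ₂ ≤ 1

variable {Atom R : Type*}

/-- An interpretation `I : Atom → ℝ × ℝ` is `C([0,1])`-valued when
`0 ≤ I¹(p) ≤ I²(p) ≤ 1` for every atom `p`. -/
def validC (I : Atom → ℝ × ℝ) : Prop :=
  ∀ p : Atom, 0 ≤ (I p).1 ∧ (I p).1 ≤ (I p).2 ∧ (I p).2 ≤ 1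

/-- First component of the body of a rule, with positive atoms evaluated under `I` and
negated atoms under `J`: `∏_{j≤h} I¹(q_j) · ∏_{h<j≤k} (1 − J²(q_j))`. -/
def body1 (r : CRule Atom) (I J : Atom → ℝ × ℝ) : ℝ :=
  ∏ j : Fin r.k, if (j : ℕ) < r.h then (I (r.atoms j)).1 else 1 - (J (r.atoms j)).2

/-- Second component of the body of a rule, with positive atoms evaluated under `I` and
negated atoms under `J`: `∏_{j≤h} I²(q_j) · ∏_{h<j≤k} (1 − J¹(q_j))`. -/
def body2 (r : CRule Atom) (I J : Atom → ℝ × ℝ) : ℝ :=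
  ∏ j : Fin r.k, if (j : ℕ) < r.h then (I (r.atoms j)).2 else 1 - (J (r.atoms j)).1

/-- First component of `(θ¹,θ²) &^{αγ}_{βδ} B_J(I)`, namely `(θ¹)^α · (B_J(I)¹)^γ`. -/
def ruleVal1 (r : CRule Atom) (I J : Atom → ℝ × ℝ) : ℝ :=
  r.θ₁ ^ r.α * body1 r I J ^ r.γ

/-- Second component of `(θ¹,θ²) &^{αγ}_{βδ} B_J(I)`, namely `(θ²)^β · (B_J(I)²)^δ`. -/
def ruleVal2 (r : CRule Atom) (I J : Atom → ℝ × ℝ) : ℝ :=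
  r.θ₂ ^ r.β * body2 r I J ^ r.δ

/-- `I` is a model of the reduct `P_J`: for every rule,
`((θ¹)^α·(B_J(I)¹)^γ, (θ²)^β·(B_J(I)²)^δ) ≤ I(p)` componentwise. -/
def isModelReductC (P : R → CRule Atom) (J I : Atom → ℝ × ℝ) : Prop :=
  ∀ r : R, ruleVal1 (P r) I J ≤ (I (P r).head).1 ∧ ruleVal2 (P r) I J ≤ (I (P r).head).2

/-- `I` is a stable model of `P`: `I` is a minimal model of the reduct `P_I`. -/
def isStableC (P : R → CRule Atom) (I : Atom → ℝ × ℝ) : Prop :=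
  isModelReductC P I I ∧
    ∀ J : Atom → ℝ × ℝ, validC J → isModelReductC P I J → J ≤ I → J = I

/-- `θ¹_p`: the maximum of the first components of the weights of the rules of `P` with
head `p` (`0` if there is no such rule). -/
noncomputable def θmax1 (P : R → CRule Atom) (p : Atom) : ℝ :=
  ⨆ r : {r : R // (P r).head = p}, (P r.1).θ₁

/-- `θ²_p`: the maximum of the second components of the weights of the rules of `P` with
head `p` (`0` if there is no such rule). -/
noncomputable def θmax2 (P : R → CRule Atom) (p : Atom) : ℝ :=
  ⨆ r : {r : R // (P r).head = p}, (P r.1).θ₂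

/-- The sufficient condition of the uniqueness theorem, for a single rule
`⟨p ←^{αγ}_{βδ} q_1 ∗ ⋯ ∗ q_h ∗ ¬q_{h+1} ∗ ⋯ ∗ ¬q_k ; (θ¹,θ²)⟩`:
`∑_{j=1}^{h} (θ²)^β·δ·(θ²_{q_j})^{δ−1}·(θ²_{q_1} ⋯ θ²_{q_{j−1}}·θ²_{q_{j+1}} ⋯ θ²_{q_h})^δ
 + (θ²)^β·δ·(k−h)·(θ²_{q_1} ⋯ θ²_{q_h})^δ < 1`. -/
def uniqCond (P : R → CRule Atom) (r : CRule Atom) : Prop :=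
  (∑ j : Fin r.k, if (j : ℕ) < r.h then
      r.θ₂ ^ r.β * (r.δ : ℝ) * θmax2 P (r.atoms j) ^ (r.δ - 1) *
        (∏ j' : Fin r.k, if (j' : ℕ) < r.h ∧ j' ≠ j then θmax2 P (r.atoms j') else 1) ^ r.δ
    else 0)
  + r.θ₂ ^ r.β * (r.δ : ℝ) * ((r.k - r.h : ℕ) : ℝ) *
      (∏ j : Fin r.k, if (j : ℕ) < r.h then θmax2 P (r.atoms j) else 1) ^ r.δ < 1

/-- The immediate consequence operator of a MANLP `P` on `C([0,1])`:
`T_P(I)(p)` is the componentwise maximum over the rules with head `p` of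
`((θ¹)^α·(B(I)¹)^γ, (θ²)^β·(B(I)²)^δ)` (`(0,0)` if there is no rule with head `p`). -/
def TPc (P : R → CRule Atom) (I : Atom → ℝ × ℝ) (p : Atom) : ℝ × ℝ :=
  (⨆ r : {r : R // (P r).head = p}, ruleVal1 (P r.1) I I,
   ⨆ r : {r : R // (P r).head = p}, ruleVal2 (P r.1) I I)

/-- The interpretation `I_θ` assigning to each atom `p` the componentwise maximum
`(θ¹_p, θ²_p)` of the weights of the rules with head `p`. -/
def Iθ (P : R → CRule Atom) (p : Atom) : ℝ × ℝ := (θmax1 P p, θmax2 P p)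

/-- every fix-point of `T_P` is bounded by the maximal weights.  Let `P` be
a finite MANLP on `C([0,1])` whose bodies use only ei-products with all exponents `1`, and
assume `1 ≤ β_w` and `1 ≤ δ_w` for every rule.  If `I` is a `C([0,1])`-valued
interpretation with `T_P(I) = I`, then `I(p) ≤ (θ¹_p, θ²_p)` for every atom `p`, i.e.
`I ⊑ I_θ`. -/
theorem fixpoint_le_max_weights [Fintype Atom] [Fintype R]
    (P : R → CRule Atom)
    (hβ : ∀ r : R, 1 ≤ (P r).β) (hδ : ∀ r : R, 1 ≤ (P r).δ)
    (I : Atom → ℝ × ℝ) (hI : validC I) (hfix : TPc P I = I) :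
    I ≤ Iθ P := by
  intro p
  have hfp := congrFun hfix p
  have key1 : ∀ r : {r : R // (P r).head = p}, ruleVal1 (P r.1) I I ≤ θmax1 P p := by
    intro r
    have h01 : (P r.1).θ₁ ≤ 1 := le_trans (P r.1).θ₁_le_θ₂ (P r.1).θ₂_le_one
    have hb0 : 0 ≤ body1 (P r.1) I I := by
      apply Finset.prod_nonneg; intro j _
      split
      · exact (hI _).1
      · have := (hI ((P r.1).atoms j)); linarith [this.1, this.2.1, this.2.2]
    have hb1 : body1 (P r.1) I I ≤ 1 := by
      apply Finset.prod_le_one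
      · intro j _
        split
        · exact (hI _).1
        · have := hI ((P r.1).atoms j); linarith [this.1, this.2.1, this.2.2]
      · intro j _
        split
        · have := hI ((P r.1).atoms j); linarith [this.2.1, this.2.2]
        · have := hI ((P r.1).atoms j); linarith [this.1, this.2.1]
    have hα : (P r.1).α ≠ 0 := by
      have := hβ r.1; have := (P r.1).β_le_α; omega
    have h1 : (P r.1).θ₁ ^ (P r.1).α ≤ (P r.1).θ₁ :=
      pow_le_of_le_one (P r.1).θ₁_nonneg h01 hα
    have h2 : body1 (P r.1) I I ^ (P r.1).γ ≤ 1 := pow_le_one₀ hb0 hb1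
    have : ruleVal1 (P r.1) I I ≤ (P r.1).θ₁ := by
      calc ruleVal1 (P r.1) I I ≤ (P r.1).θ₁ ^ (P r.1).α * 1 := by
            unfold ruleVal1
            exact mul_le_mul_of_nonneg_left h2 (pow_nonneg (P r.1).θ₁_nonneg _)
        _ = (P r.1).θ₁ ^ (P r.1).α := mul_one _
        _ ≤ (P r.1).θ₁ := h1
    refine le_trans this ?_
    unfold θmax1
    exact le_ciSup (f := fun r : {r : R // (P r).head = p} => (P r.1).θ₁)
      (Set.Finite.bddAbove (Set.finite_range _)) r
  have key2 : ∀ r : {r : R // (P r).head = p}, ruleVal2 (P r.1) I I ≤ θmax2 P p := by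
    intro r
    have h0 : 0 ≤ (P r.1).θ₂ := le_trans (P r.1).θ₁_nonneg (P r.1).θ₁_le_θ₂
    have hb0 : 0 ≤ body2 (P r.1) I I := by
      apply Finset.prod_nonneg; intro j _
      split
      · have := hI ((P r.1).atoms j); linarith [this.1, this.2.1]
      · have := hI ((P r.1).atoms j); linarith [this.1, this.2.1, this.2.2]
    have hb1 : body2 (P r.1) I I ≤ 1 := by
      apply Finset.prod_le_one
      · intro j _
        split
        · have := hI ((P r.1).atoms j); linarith [this.1, this.2.1]
        · have := hI ((P r.1).atoms j); linarith [this.1, this.2.1, this.2.2]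
      · intro j _
        split
        · exact (hI _).2.2
        · have := hI ((P r.1).atoms j); linarith [(hI ((P r.1).atoms j)).1]
    have h1 : (P r.1).θ₂ ^ (P r.1).β ≤ (P r.1).θ₂ :=
      pow_le_of_le_one h0 (P r.1).θ₂_le_one (by have := hβ r.1; omega)
    have h2 : body2 (P r.1) I I ^ (P r.1).δ ≤ 1 := pow_le_one₀ hb0 hb1
    have : ruleVal2 (P r.1) I I ≤ (P r.1).θ₂ := by
      calc ruleVal2 (P r.1) I I ≤ (P r.1).θ₂ ^ (P r.1).β * 1 := by
            unfold ruleVal2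
            exact mul_le_mul_of_nonneg_left h2 (pow_nonneg h0 _)
        _ = (P r.1).θ₂ ^ (P r.1).β := mul_one _
        _ ≤ (P r.1).θ₂ := h1
    refine le_trans this ?_
    unfold θmax2
    exact le_ciSup (f := fun r : {r : R // (P r).head = p} => (P r.1).θ₂)
      (Set.Finite.bddAbove (Set.finite_range _)) r
  have hθ1 : 0 ≤ θmax1 P p := Real.iSup_nonneg fun r => (P r.1).θ₁_nonneg
  have hθ2 : 0 ≤ θmax2 P p :=
    Real.iSup_nonneg fun r => le_trans (P r.1).θ₁_nonneg (P r.1).θ₁_le_θ₂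
  constructor
  · calc (I p).1 = (TPc P I p).1 := by rw [hfp]
      _ ≤ θmax1 P p := Real.iSup_le key1 hθ1
  · calc (I p).2 = (TPc P I p).2 := by rw [hfp]
      _ ≤ θmax2 P p := Real.iSup_le key2 hθ2
end
end
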